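/- For integers N ≥ 2 and k ≥ 2, let δ_N^k > 0 be a real number such that ĥv_x^k(S) ≥ δ_N^k · N holds for every set S of N points in the plane in general position. Then qp_k(N) ≤ (1/δ_N^k) · qp_k(N−1). -/
import Mathlib


open scoped Classical

noncomputable section

/-- A point in the plane. -/
abbrev Pt : Type := ℝ × ℝ

/-- `S` is in general position: no three distinct points of `S` are collinear. -/
def GenPos (S : Finset Pt) : Prop :=
  ∀ p ∈ S, ∀ q ∈ S, ∀ r ∈ S, p ≠ q → p ≠ r → q ≠ r →
    ¬ Collinear ℝ ({p, q, r} : Set Pt)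

/-- Two straight edges cross if their relative interiors (open segments) meet. -/
def EdgesCross (e f : Sym2 Pt) : Prop :=
  ∃ a b c d : Pt, e = s(a, b) ∧ f = s(c, d) ∧
    (openSegment ℝ a b ∩ openSegment ℝ c d).Nonempty

/-- `G` is a crossing-free straight-edge (plane) graph on the point set `S`:
its edges are nondegenerate straight segments between points of `S`,
and no two distinct edges cross. -/
def IsPlaneGraph (S : Finset Pt) (G : Finset (Sym2 Pt)) : Prop :=
  (∀ e ∈ G, ¬ e.IsDiag ∧ ∀ p ∈ e, p ∈ S) ∧
    ∀ e ∈ G, ∀ f ∈ G, e ≠ f → ¬ EdgesCross e f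

/-- The (finite) collection of all plane graphs on `S`. -/
def planeGraphs (S : Finset Pt) : Finset (Finset (Sym2 Pt)) :=
  S.sym2.powerset.filter (IsPlaneGraph S)

/-- The degree of the point `p` in the graph `G`. -/
def vingDeg (G : Finset (Sym2 Pt)) (p : Pt) : ℕ :=
  (G.filter fun e => p ∈ e).card

/-- The ving `(p, G)` is an x-ving: no straight edge from `p` to another point
of `S` can be added to `G` while keeping the graph plane. -/
def IsXVing (S : Finset Pt) (G : Finset (Sym2 Pt)) (p : Pt) : Prop :=
  ∀ q ∈ S, q ≠ p → s(p, q) ∉ G → ¬ IsPlaneGraph S (insert s(p, q) G)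

/-- `v_x(G)`: the number of x-vings of `G`. -/
def vx (S : Finset Pt) (G : Finset (Sym2 Pt)) : ℕ :=
  (S.filter (IsXVing S G)).card

/-- `v_i(G)`: the number of vertices of degree exactly `i` in `G`. -/
def vdeg (S : Finset Pt) (G : Finset (Sym2 Pt)) (i : ℕ) : ℕ :=
  (S.filter fun p => vingDeg G p = i).card

/-- `ĥv_x(S)`: the average of `v_x(G)` over a uniformly random plane graph on `S`. -/
def hvx (S : Finset Pt) : ℝ :=
  (∑ G ∈ planeGraphs S, (vx S G : ℝ)) / (planeGraphs S).card

/-- `ĥv_i(S)`: the average of `v_i(G)` over a uniformly random plane graph on `S`. -/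
def hvdeg (S : Finset Pt) (i : ℕ) : ℝ :=
  (∑ G ∈ planeGraphs S, (vdeg S G i : ℝ)) / (planeGraphs S).card

/-- `pg(N)`: the maximum number of plane graphs over all sets of `N` points in
general position. -/
def pgMax (N : ℕ) : ℕ :=
  sSup {n : ℕ | ∃ S : Finset Pt, S.card = N ∧ GenPos S ∧ (planeGraphs S).card = n}

/-- The plane graphs on `S` with at most `m` edges. -/
def planeGraphsLE (S : Finset Pt) (m : ℝ) : Finset (Finset (Sym2 Pt)) :=
  (planeGraphs S).filter fun G => (G.card : ℝ) ≤ m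

/-- `ĥv_{x,m}(S)`: the average of `v_x(G)` over a uniformly random plane graph
on `S` with at most `m` edges. -/
def hvxLE (S : Finset Pt) (m : ℝ) : ℝ :=
  (∑ G ∈ planeGraphsLE S m, (vx S G : ℝ)) / (planeGraphsLE S m).card

/-- `G` has no vertex (point of `S`) of degree smaller than `i`. -/
def MinDegGe (S : Finset Pt) (G : Finset (Sym2 Pt)) (i : ℕ) : Prop :=
  ∀ p ∈ S, i ≤ vingDeg G p

/-- The plane graphs on `S` with no vertex of degree smaller than `i`. -/
def planeGraphsDeg (S : Finset Pt) (i : ℕ) : Finset (Finset (Sym2 Pt)) :=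
  (planeGraphs S).filter fun G => MinDegGe S G i

/-- The plane graphs on `S` with at most `m` edges and no vertex of degree
smaller than `i`. -/
def planeGraphsLEDeg (S : Finset Pt) (m : ℝ) (i : ℕ) : Finset (Finset (Sym2 Pt)) :=
  (planeGraphs S).filter fun G => (G.card : ℝ) ≤ m ∧ MinDegGe S G i

/-- `ĥv_{x,m}(S,i)`: the average of `v_x(G)` over a uniformly random plane graph
on `S` with at most `m` edges and no vertex of degree smaller than `i`. -/
def hvxLEDeg (S : Finset Pt) (m : ℝ) (i : ℕ) : ℝ :=
  (∑ G ∈ planeGraphsLEDeg S m i, (vx S G : ℝ)) / (planeGraphsLEDeg S m i).card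

/-- `pg(N, i)`: the maximum, over sets `S` of `N` points in general position, of
the number of plane graphs on `S` with no vertex of degree smaller than `i`. -/
def pgMaxDeg (N i : ℕ) : ℕ :=
  sSup {n : ℕ | ∃ S : Finset Pt, S.card = N ∧ GenPos S ∧ (planeGraphsDeg S i).card = n}

/-- The underlying abstract graph of `G` on the vertex set `S`. -/
def abstractGraph (S : Finset Pt) (G : Finset (Sym2 Pt)) :
    SimpleGraph (S : Set Pt) :=
  SimpleGraph.induce (S : Set Pt) (SimpleGraph.fromEdgeSet (G : Set (Sym2 Pt)))

/-- The connected plane graphs on `S`. -/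
def connPlaneGraphs (S : Finset Pt) : Finset (Finset (Sym2 Pt)) :=
  (planeGraphs S).filter fun G => (abstractGraph S G).Connected

/-- The underlying abstract graph of `G` is bi-connected (2-vertex-connected):
it is connected and remains connected after deletion of any single vertex. -/
def Biconnected (S : Finset Pt) (G : Finset (Sym2 Pt)) : Prop :=
  (abstractGraph S G).Connected ∧
    ∀ v ∈ S, (SimpleGraph.induce ((S : Set Pt) \ {v})
      (SimpleGraph.fromEdgeSet (G : Set (Sym2 Pt)))).Connected

/-- The bi-connected plane graphs on `S`. -/
def biconnPlaneGraphs (S : Finset Pt) : Finset (Finset (Sym2 Pt)) :=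
  (planeGraphs S).filter (Biconnected S)

/-- `G` is a `k`-quasi-plane graph on `S`: a straight-edge graph on `S`
(crossings allowed) with no `k` pairwise crossing edges. -/
def IsQuasiPlane (k : ℕ) (S : Finset Pt) (G : Finset (Sym2 Pt)) : Prop :=
  (∀ e ∈ G, ¬ e.IsDiag ∧ ∀ p ∈ e, p ∈ S) ∧
    ¬ ∃ T ⊆ G, T.card = k ∧ ∀ e ∈ T, ∀ f ∈ T, e ≠ f → EdgesCross e f

/-- The (finite) collection of all `k`-quasi-plane graphs on `S`. -/
def qpGraphs (k : ℕ) (S : Finset Pt) : Finset (Finset (Sym2 Pt)) :=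
  S.sym2.powerset.filter (IsQuasiPlane k S)

/-- The ving `(p, G)` is an x-ving of the `k`-quasi-plane graph `G`: no straight
edge from `p` to another point of `S` can be added to `G` without violating
`k`-quasi-planarity. -/
def IsXVingQP (k : ℕ) (S : Finset Pt) (G : Finset (Sym2 Pt)) (p : Pt) : Prop :=
  ∀ q ∈ S, q ≠ p → s(p, q) ∉ G → ¬ IsQuasiPlane k S (insert s(p, q) G)

/-- `v_x(G)` for a `k`-quasi-plane graph `G`. -/
def vxQP (k : ℕ) (S : Finset Pt) (G : Finset (Sym2 Pt)) : ℕ :=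
  (S.filter (IsXVingQP k S G)).card

/-- `ĥv_x^k(S)`: the average of `v_x(G)` over a uniformly random `k`-quasi-plane
graph on `S`. -/
def hvxQP (k : ℕ) (S : Finset Pt) : ℝ :=
  (∑ G ∈ qpGraphs k S, (vxQP k S G : ℝ)) / (qpGraphs k S).card

/-- `qp_k(N)`: the maximum number of `k`-quasi-plane graphs over all sets of `N`
points in general position. -/
def qpMax (k N : ℕ) : ℕ :=
  sSup {n : ℕ | ∃ S : Finset Pt, S.card = N ∧ GenPos S ∧ (qpGraphs k S).card = n}

lemma openSeg_eq_of_sym2_eq {a b p q : Pt} (h : s(a,b) = s(p,q)) :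
    openSegment ℝ a b = openSegment ℝ p q := by
  rcases Sym2.eq_iff.1 h with ⟨rfl, rfl⟩ | ⟨rfl, rfl⟩
  · rfl
  · exact openSegment_symm ℝ _ _

lemma collinear_of_openSeg {p q r : Pt}
    (h : (openSegment ℝ p q ∩ openSegment ℝ p r).Nonempty) :
    Collinear ℝ ({p, q, r} : Set Pt) := by
  obtain ⟨x, hx1, hx2⟩ := h
  rw [openSegment_eq_image] at hx1 hx2
  obtain ⟨t, ht, hxt⟩ := hx1
  obtain ⟨s, hs, hxs⟩ := hx2
  have key : q - p = (s / t) • (r - p) := by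
    have h1 : t • (q - p) = s • (r - p) := by
      have h' : t • (q - p) = x - p := by rw [← hxt]; ring_nf; module
      have h'' : s • (r - p) = x - p := by rw [← hxs]; ring_nf; module
      rw [h', h'']
    have ht0 : (t : ℝ) ≠ 0 := ne_of_gt ht.1
    calc q - p = t⁻¹ • (t • (q - p)) := by rw [smul_smul, inv_mul_cancel₀ ht0, one_smul]
      _ = t⁻¹ • (s • (r - p)) := by rw [h1]
      _ = (s / t) • (r - p) := by rw [smul_smul, div_eq_mul_inv, mul_comm]
  rw [collinear_iff_of_mem (Set.mem_insert p _)]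
  refine ⟨r - p, fun z hz => ?_⟩
  rcases hz with rfl | rfl | rfl
  · exact ⟨0, by simp⟩
  · exact ⟨s / t, by rw [← key, vadd_eq_add]; abel⟩
  · exact ⟨1, by rw [one_smul, vadd_eq_add]; abel⟩

lemma not_cross_shared {p q r : Pt}
    (hcol : ¬ Collinear ℝ ({p, q, r} : Set Pt)) :
    ¬ EdgesCross s(p,q) s(p,r) := by
  rintro ⟨a, b, c, d, he, hf, hne⟩
  apply hcol
  apply collinear_of_openSeg
  rwa [openSeg_eq_of_sym2_eq he.symm, openSeg_eq_of_sym2_eq hf.symm] at hne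

lemma subset_of_xving {k : ℕ} {S : Finset Pt} {p : Pt} {G₁ G₂ : Finset (Sym2 Pt)}
    (hS : GenPos S) (hp : p ∈ S)
    (h1 : IsQuasiPlane k S G₁) (h2 : IsQuasiPlane k S G₂)
    (hx2 : IsXVingQP k S G₂ p)
    (hφ : G₁.filter (fun e => p ∉ e) = G₂.filter (fun e => p ∉ e)) :
    G₁ ⊆ G₂ := by
  intro e he
  by_cases hpe : p ∈ e
  · obtain ⟨q, rfl⟩ := Sym2.mem_iff_exists.1 hpe
    have hq : q ∈ S := (h1.1 _ he).2 q (Sym2.mem_mk_right p q)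
    have hnd := (h1.1 _ he).1
    have hqp : q ≠ p := by rintro rfl; exact hnd (by simp)
    by_contra he2
    apply hx2 q hq hqp he2
    constructor
    · intro f hf
      rcases Finset.mem_insert.1 hf with rfl | hf'
      · exact h1.1 _ he
      · exact h2.1 _ hf'
    · rintro ⟨T, hT, hTcard, hTcross⟩
      by_cases heT : s(p,q) ∈ T
      · have hTG1 : T ⊆ G₁ := by
          intro f hfT
          by_cases hfe : f = s(p,q)
          · exact hfe ▸ he
          · have hfG2 : f ∈ G₂ := by
              rcases Finset.mem_insert.1 (hT hfT) with h' | h'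
              · exact absurd h' hfe
              · exact h'
            have hpf : p ∉ f := by
              intro hpf
              obtain ⟨r, rfl⟩ := Sym2.mem_iff_exists.1 hpf
              have hr : r ∈ S := (h2.1 _ hfG2).2 r (Sym2.mem_mk_right p r)
              have hrp : r ≠ p := by rintro rfl; exact (h2.1 _ hfG2).1 (by simp)
              have hqr : q ≠ r := fun hh => hfe (by rw [hh])
              have hcross := hTcross _ heT _ hfT (Ne.symm hfe)
              exact not_cross_shared
                (hS p hp q hq r hr (Ne.symm hqp) (Ne.symm hrp) hqr) hcross
            have hmem : f ∈ G₂.filter (fun e => p ∉ e) := Finset.mem_filter.2 ⟨hfG2, hpf⟩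
            rw [← hφ] at hmem
            exact (Finset.mem_filter.1 hmem).1
        exact h1.2 ⟨T, hTG1, hTcard, hTcross⟩
      · have hTG2 : T ⊆ G₂ := by
          intro f hf
          rcases Finset.mem_insert.1 (hT hf) with rfl | h'
          · exact absurd hf heT
          · exact h'
        exact h2.2 ⟨T, hTG2, hTcard, hTcross⟩
  · have hmem : e ∈ G₁.filter (fun e => p ∉ e) := Finset.mem_filter.2 ⟨he, hpe⟩
    rw [hφ] at hmem
    exact (Finset.mem_filter.1 hmem).1

lemma qp_bdd (k M : ℕ) :
    BddAbove {n : ℕ | ∃ S : Finset Pt, S.card = M ∧ GenPos S ∧ (qpGraphs k S).card = n} := by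
  refine ⟨2 ^ ((M + 1).choose 2), ?_⟩
  rintro n ⟨S, hc, -, rfl⟩
  calc (qpGraphs k S).card ≤ S.sym2.powerset.card := Finset.card_filter_le _ _
    _ = 2 ^ S.sym2.card := Finset.card_powerset _
    _ = 2 ^ ((M + 1).choose 2) := by rw [Finset.card_sym2, hc]

lemma empty_mem_qp (k : ℕ) (hk : 2 ≤ k) (S : Finset Pt) : ∅ ∈ qpGraphs k S := by
  refine Finset.mem_filter.2 ⟨Finset.mem_powerset.2 (Finset.empty_subset _), ⟨by simp, ?_⟩⟩
  rintro ⟨T, hT, hTc, -⟩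
  rw [Finset.subset_empty.1 hT] at hTc
  simp at hTc
  omega

/-- Lemma 3.1. For `N ≥ 2` and `k ≥ 2`, if `ĥv_x^k(S) ≥ δ_N^k · N`
holds for every set `S` of `N` points in general position, then
`qp_k(N) ≤ (1/δ_N^k) · qp_k(N-1)`. -/
theorem stmt16 (N k : ℕ) (hN : 2 ≤ N) (hk : 2 ≤ k) (δ : ℝ) (hδ : 0 < δ)
    (h : ∀ S : Finset Pt, S.card = N → GenPos S → δ * N ≤ hvxQP k S) :
    (qpMax k N : ℝ) ≤ (1 / δ) * qpMax k (N - 1) := by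
  have hA : qpMax k N =
      sSup {n : ℕ | ∃ S : Finset Pt, S.card = N ∧ GenPos S ∧ (qpGraphs k S).card = n} := rfl
  by_cases hAne : {n : ℕ | ∃ S : Finset Pt, S.card = N ∧ GenPos S ∧
      (qpGraphs k S).card = n}.Nonempty
  · obtain ⟨S, hScard, hSgen, hq⟩ := Nat.sSup_mem hAne (qp_bdd k N)
    rw [hA, ← hq]
    set Q := qpGraphs k S with hQ
    have hq0 : 0 < Q.card := Finset.card_pos.2 ⟨∅, empty_mem_qp k hk S⟩
    have hq0R : (0 : ℝ) < (Q.card : ℝ) := by exact_mod_cast hq0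
    have hsum : δ * N * Q.card ≤ ∑ G ∈ Q, (vxQP k S G : ℝ) := by
      have := h S hScard hSgen
      rw [hvxQP] at this
      exact (le_div_iff₀ hq0R).1 this
    have hdc : ∑ G ∈ Q, (vxQP k S G) =
        ∑ p ∈ S, (Q.filter (fun G => IsXVingQP k S G p)).card := by
      unfold vxQP
      simp_rw [Finset.card_filter]
      exact Finset.sum_comm
    have hSne : S.Nonempty := Finset.card_pos.1 (by omega)
    have hstep : ∑ p ∈ S, (δ * Q.card) ≤
        ∑ p ∈ S, ((Q.filter (fun G => IsXVingQP k S G p)).card : ℝ) := by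
      rw [Finset.sum_const, hScard, nsmul_eq_mul]
      calc (N : ℝ) * (δ * Q.card) = δ * N * Q.card := by ring
        _ ≤ ∑ G ∈ Q, (vxQP k S G : ℝ) := hsum
        _ = ∑ p ∈ S, ((Q.filter (fun G => IsXVingQP k S G p)).card : ℝ) := by
            rw [← Nat.cast_sum, hdc, Nat.cast_sum]
    obtain ⟨p, hpS, hple⟩ := Finset.exists_le_of_sum_le hSne hstep
    -- the erased set
    have hgen' : GenPos (S.erase p) := by
      intro a ha b hb c hc hab hac hbc
      exact hSgen a (Finset.mem_of_mem_erase ha) b (Finset.mem_of_mem_erase hb)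
        c (Finset.mem_of_mem_erase hc) hab hac hbc
    have hcard' : (S.erase p).card = N - 1 := by
      rw [Finset.card_erase_of_mem hpS, hScard]
    have hmap : ∀ G ∈ Q.filter (fun G => IsXVingQP k S G p),
        G.filter (fun e => p ∉ e) ∈ qpGraphs k (S.erase p) := by
      intro G hG
      have hGQ : IsQuasiPlane k S G :=
        (Finset.mem_filter.1 ((Finset.mem_filter.1 hG).1)).2
      refine Finset.mem_filter.2 ⟨Finset.mem_powerset.2 ?_, ?_, ?_⟩
      · intro e he
        obtain ⟨heG, hpe⟩ := Finset.mem_filter.1 he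
        refine Finset.mem_sym2_iff.2 fun a ha => Finset.mem_erase.2 ⟨?_, (hGQ.1 e heG).2 a ha⟩
        rintro rfl
        exact hpe ha
      · intro e he
        obtain ⟨heG, hpe⟩ := Finset.mem_filter.1 he
        refine ⟨(hGQ.1 e heG).1, fun a ha => Finset.mem_erase.2 ⟨?_, (hGQ.1 e heG).2 a ha⟩⟩
        rintro rfl
        exact hpe ha
      · rintro ⟨T, hT, hTcard, hTcross⟩
        exact hGQ.2 ⟨T, hT.trans (Finset.filter_subset _ _), hTcard, hTcross⟩
    have hinj : Set.InjOn (fun G : Finset (Sym2 Pt) => G.filter (fun e => p ∉ e))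
        ↑(Q.filter (fun G => IsXVingQP k S G p)) := by
      intro G₁ h1 G₂ h2 heq
      simp only [Finset.coe_filter, Set.mem_setOf_eq] at h1 h2
      have q1 : IsQuasiPlane k S G₁ := (Finset.mem_filter.1 h1.1).2
      have q2 : IsQuasiPlane k S G₂ := (Finset.mem_filter.1 h2.1).2
      exact Finset.Subset.antisymm
        (subset_of_xving hSgen hpS q1 q2 h2.2 heq)
        (subset_of_xving hSgen hpS q2 q1 h1.2 heq.symm)
    have hcard2 : (Q.filter (fun G => IsXVingQP k S G p)).card ≤
        (qpGraphs k (S.erase p)).card :=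
      Finset.card_le_card_of_injOn _ hmap hinj
    have hle : (qpGraphs k (S.erase p)).card ≤ qpMax k (N - 1) :=
      le_csSup (qp_bdd k (N - 1)) ⟨S.erase p, hcard', hgen', rfl⟩
    have hfinal : δ * Q.card ≤ (qpMax k (N - 1) : ℝ) :=
      hple.trans (by exact_mod_cast hcard2.trans hle)
    rw [one_div, ← div_eq_inv_mul, le_div_iff₀ hδ, mul_comm]
    exact hfinal
  · rw [hA, Set.not_nonempty_iff_eq_empty.1 hAne, csSup_empty]
    simp only [Nat.bot_eq_zero, Nat.cast_zero]
    positivity
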